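/- arXiv:1408.3499 — 4 statements merged into one kernel-verified Lean document; each statement's English description precedes it below -/
import Mathlib

section
/- Let δ, λ, σ > 0 and let c : [0,∞) → ℝ be measurable with 0 ≤ c(t) ≤ μ₂ for all t, where 4δ²λ^{4σ-2} ≥ μ₂. Let u be a solution of u'' + 2δλ^{2σ}u' + λ²c(t)u = 0 with u(0)=u₀, u'(0)=u₁. Then the energy E(t) = (u'(t)+δλ^{2σ}u(t))² + δ²λ^{4σ}u(t)² is nonincreasing, and consequently |u(t)|² ≤ (2/(δ²λ^{4σ}))u₁² + 3u₀² for all t ≥ 0. -/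
/-!
With `a = δ λ^{2σ}` and `b(t) = λ² c(t)` the equation reads `u'' + 2a u' + b u = 0`, and along
solutions the energy `E = (u' + a u)² + a² u²` satisfies
`E' = -2 (a u'² + b u u' + a b u²)`.
This quadratic form in `(u', u)` has discriminant `b (b - 4a²)`, which is nonpositive exactly when
`0 ≤ b ≤ 4a²`; the hypothesis `4δ²λ^{4σ-2} ≥ μ₂` is this condition. Hence `E` is nonincreasing,
and `a² u(t)² ≤ E(t) ≤ E(0) ≤ 2 u₁² + 3 a² u₀²`.
-/

open Real Set

lemma mul_sq_add_mul_mul_add_mul_mul_sq_nonneg {a b : ℝ} (ha : 0 < a) (hb : 0 ≤ b)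
    (hba : b ≤ 4 * a ^ 2) (x y : ℝ) :
    0 ≤ a * x ^ 2 + b * x * y + a * b * y ^ 2 := by
  nlinarith [sq_nonneg (2 * a * x + b * y),
    mul_nonneg (mul_nonneg hb (sub_nonneg.mpr hba)) (sq_nonneg y)]

/-- The energy of `u'' + 2a u' + b(t) u = 0`, for a function `u` with derivative `u'`. -/
def dampedEnergy (a : ℝ) (u u' : ℝ → ℝ) (t : ℝ) : ℝ :=
  (u' t + a * u t) ^ 2 + a ^ 2 * u t ^ 2

section DampedOscillator

variable {a : ℝ} {u u' u'' : ℝ → ℝ}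

lemma hasDerivAt_dampedEnergy (hu : ∀ t, HasDerivAt u (u' t) t)
    (hu' : ∀ t, HasDerivAt u' (u'' t) t) (t : ℝ) :
    HasDerivAt (dampedEnergy a u u')
      (2 * (u' t + a * u t) * (u'' t + a * u' t) + 2 * a ^ 2 * u t * u' t) t := by
  have h := (((hu' t).add ((hu t).const_mul a)).pow 2).add (((hu t).pow 2).const_mul (a ^ 2))
  exact h.congr_deriv (by simp only [Pi.add_apply]; ring)

lemma antitoneOn_dampedEnergy {b : ℝ → ℝ} (ha : 0 < a)
    (hb : ∀ t ≥ (0 : ℝ), 0 ≤ b t ∧ b t ≤ 4 * a ^ 2)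
    (hu : ∀ t, HasDerivAt u (u' t) t) (hu' : ∀ t, HasDerivAt u' (u'' t) t)
    (hode : ∀ t ≥ (0 : ℝ), u'' t + 2 * a * u' t + b t * u t = 0) :
    AntitoneOn (dampedEnergy a u u') (Ici 0) := by
  have hE := hasDerivAt_dampedEnergy (a := a) hu hu'
  refine antitoneOn_of_hasDerivWithinAt_nonpos (convex_Ici 0)
    (fun t _ => (hE t).continuousAt.continuousWithinAt) (fun t _ => (hE t).hasDerivWithinAt)
    fun t ht => ?_
  rw [interior_Ici] at ht
  obtain ⟨hb0, hb4⟩ := hb t (le_of_lt ht)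
  have hu''_eq : u'' t = -(2 * a * u' t + b t * u t) := by linarith [hode t (le_of_lt ht)]
  rw [hu''_eq]
  nlinarith [mul_sq_add_mul_mul_add_mul_mul_sq_nonneg ha hb0 hb4 (u' t) (u t)]

lemma sq_le_of_antitoneOn_dampedEnergy (ha : a ≠ 0)
    (hanti : AntitoneOn (dampedEnergy a u u') (Ici 0)) {t : ℝ} (ht : 0 ≤ t) :
    u t ^ 2 ≤ 2 / a ^ 2 * u' 0 ^ 2 + 3 * u 0 ^ 2 := by
  have hEt : dampedEnergy a u u' t ≤ dampedEnergy a u u' 0 := hanti self_mem_Ici ht ht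
  unfold dampedEnergy at hEt
  have ha2 : 0 < a ^ 2 := by positivity
  rw [div_mul_eq_mul_div, ← sub_le_iff_le_add, le_div_iff₀ ha2]
  nlinarith [sq_nonneg (u' t + a * u t), sq_nonneg (u' 0 - a * u 0)]

end DampedOscillator

lemma rpow_two_mul_sq {l : ℝ} (hl : 0 ≤ l) (σ : ℝ) : (l ^ (2 * σ)) ^ 2 = l ^ (4 * σ) := by
  rw [← rpow_mul_natCast hl]
  norm_num
  ring_nf

lemma sq_mul_rpow_sub_two {l : ℝ} (hl : l ≠ 0) (s : ℝ) : l ^ 2 * l ^ (s - 2) = l ^ s := by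
  have h := rpow_sub_natCast hl s 2
  norm_num at h
  rw [h]
  field_simp

theorem stmt1_general (δ l σ μ₂ : ℝ) (hδ : 0 < δ) (hl : 0 < l)
    (c : ℝ → ℝ)
    (hc : ∀ t ≥ (0:ℝ), 0 ≤ c t ∧ c t ≤ μ₂)
    (hmain : 4 * δ ^ 2 * l ^ (4*σ - 2) ≥ μ₂)
    (u u' u'' : ℝ → ℝ)
    (hu : ∀ t, HasDerivAt u (u' t) t) (hu' : ∀ t, HasDerivAt u' (u'' t) t)
    (hode : ∀ t ≥ (0:ℝ), u'' t + 2 * δ * l ^ (2*σ) * u' t + l ^ 2 * c t * u t = 0)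
    (u₀ u₁ : ℝ) (h0 : u 0 = u₀) (h1 : u' 0 = u₁)
    (E : ℝ → ℝ)
    (hE : ∀ t, E t = (u' t + δ * l ^ (2*σ) * u t) ^ 2 + δ ^ 2 * l ^ (4*σ) * (u t) ^ 2) :
    AntitoneOn E (Set.Ici 0) ∧
    ∀ t ≥ (0:ℝ), (u t) ^ 2 ≤ 2 / (δ ^ 2 * l ^ (4*σ)) * u₁ ^ 2 + 3 * u₀ ^ 2 := by
  set a := δ * l ^ (2*σ)
  have ha : 0 < a := by positivity
  have ha_sq : a ^ 2 = δ ^ 2 * l ^ (4*σ) := by rw [mul_pow, rpow_two_mul_sq hl.le]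
  have hE_eq : E = dampedEnergy a u u' := funext fun t => by rw [hE, dampedEnergy, ha_sq]
  have hb : ∀ t ≥ (0:ℝ), 0 ≤ l ^ 2 * c t ∧ l ^ 2 * c t ≤ 4 * a ^ 2 := fun t ht =>
    ⟨by positivity [(hc t ht).1], calc
      l ^ 2 * c t ≤ l ^ 2 * (4 * δ ^ 2 * l ^ (4*σ - 2)) := by gcongr; linarith [(hc t ht).2]
      _ = 4 * a ^ 2 := by rw [ha_sq, ← sq_mul_rpow_sub_two hl.ne' (4*σ)]; ring⟩
  have hanti := antitoneOn_dampedEnergy ha hb hu hu' fun t ht => by linarith [hode t ht]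
  refine ⟨hE_eq ▸ hanti, fun t ht => ?_⟩
  rw [← ha_sq, ← h0, ← h1]
  exact sq_le_of_antitoneOn_dampedEnergy ha.ne' hanti ht

theorem stmt1 (δ l σ μ₂ : ℝ) (hδ : 0 < δ) (hl : 0 < l) (hσ : 0 < σ)
    (c : ℝ → ℝ) (hc_meas : Measurable c)
    (hc : ∀ t ≥ (0:ℝ), 0 ≤ c t ∧ c t ≤ μ₂)
    (hmain : 4 * δ ^ 2 * l ^ (4*σ - 2) ≥ μ₂)
    (u u' u'' : ℝ → ℝ)
    (hu : ∀ t, HasDerivAt u (u' t) t) (hu' : ∀ t, HasDerivAt u' (u'' t) t)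
    (hode : ∀ t ≥ (0:ℝ), u'' t + 2 * δ * l ^ (2*σ) * u' t + l ^ 2 * c t * u t = 0)
    (u₀ u₁ : ℝ) (h0 : u 0 = u₀) (h1 : u' 0 = u₁)
    (E : ℝ → ℝ)
    (hE : ∀ t, E t = (u' t + δ * l ^ (2*σ) * u t) ^ 2 + δ ^ 2 * l ^ (4*σ) * (u t) ^ 2) :
    AntitoneOn E (Set.Ici 0) ∧
    ∀ t ≥ (0:ℝ), (u t) ^ 2 ≤ 2 / (δ ^ 2 * l ^ (4*σ)) * u₁ ^ 2 + 3 * u₀ ^ 2 :=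
  stmt1_general δ l σ μ₂ hδ hl c hc hmain u u' u'' hu hu' hode u₀ u₁ h0 h1 E hE
end

section
/- Let λ ≥ 1, σ ≥ 1/2, and let α, β be real numbers with 1−σ ≤ α−β ≤ σ. Assume 0 ≤ c(t) ≤ μ₂ and 4δ²λ^{4σ-2} ≥ μ₂ with δ > 0. Then the solution u of u'' + 2δλ^{2σ}u' + λ²c(t)u = 0 satisfies λ^{4β}|u'(t)|² + λ^{4α}|u(t)|² ≤ (2 + 2/δ² + μ₂²/δ⁴) λ^{4β}u₁² + 3(1 + μ₂²/(2δ²)) λ^{4α}u₀² for all t ≥ 0. -/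
open Real Set

/-! With `a = δ λ^{2σ}` the equation is overdamped (`λ² c ≤ 4a²`), so the energy
`(u' + a u)² + a² u²` is nonincreasing, which bounds `u`. Then `w = u'` solves
`w' + 2a w = -λ² c u` with bounded forcing, and the integrating factor `e^{2at}` bounds it.
Finally `λ ≥ 1` and the gap condition absorb the powers of `λ` into the weights. -/

lemma antitoneOn_Ici_of_hasDerivAt_nonpos {f f' : ℝ → ℝ} {t₀ : ℝ}
    (hf : ∀ t, HasDerivAt f (f' t) t) (hf' : ∀ t > t₀, f' t ≤ 0) : AntitoneOn f (Ici t₀) :=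
  antitoneOn_of_hasDerivWithinAt_nonpos (convex_Ici t₀)
    (fun t _ => (hf t).continuousAt.continuousWithinAt) (fun t _ => (hf t).hasDerivWithinAt)
    (fun t ht => hf' t (by rwa [interior_Ici] at ht))

lemma le_max_of_deriv_add_mul_le {v v' : ℝ → ℝ} {b K : ℝ} (hb : 0 ≤ b)
    (hv : ∀ t, HasDerivAt v (v' t) t) (hK : ∀ t ≥ 0, v' t + b * v t ≤ b * K)
    {t : ℝ} (ht : 0 ≤ t) : v t ≤ max (v 0) K := by
  have hg : ∀ s, HasDerivAt (fun s => exp (b * s) * (v s - K))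
      (exp (b * s) * (v' s + b * v s - b * K)) s := fun s => by
    refine ((((hasDerivAt_id s).const_mul b).exp).fun_mul ((hv s).sub_const K)).congr_deriv ?_
    simp only [id, mul_one]; ring
  have hanti : AntitoneOn (fun s => exp (b * s) * (v s - K)) (Ici 0) :=
    antitoneOn_Ici_of_hasDerivAt_nonpos hg fun s hs =>
      mul_nonpos_of_nonneg_of_nonpos (exp_pos _).le (by linarith [hK s hs.le])
  have hgt : exp (b * t) * (v t - K) ≤ v 0 - K := by
    simpa using hanti self_mem_Ici ht ht
  have hexp : 1 ≤ exp (b * t) := one_le_exp (mul_nonneg hb ht)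
  rcases le_or_gt (v t) K with h | h
  · exact le_max_of_le_right h
  · exact le_max_of_le_left (by nlinarith)

lemma abs_le_max_of_abs_deriv_add_mul_le {v v' : ℝ → ℝ} {b K : ℝ} (hb : 0 ≤ b)
    (hv : ∀ t, HasDerivAt v (v' t) t) (hK : ∀ t ≥ 0, |v' t + b * v t| ≤ b * K)
    {t : ℝ} (ht : 0 ≤ t) : |v t| ≤ max |v 0| K := by
  have hup := le_max_of_deriv_add_mul_le hb hv (fun s hs => (abs_le.mp (hK s hs)).2) ht
  have hdown := le_max_of_deriv_add_mul_le (v := fun s => -v s) (K := K) hb (fun s => (hv s).neg)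
    (fun s hs => by linarith [(abs_le.mp (hK s hs)).1]) ht
  exact abs_le.mpr ⟨by linarith [max_le_max (neg_le_abs (v 0)) (le_refl K)],
    hup.trans (max_le_max (le_abs_self _) le_rfl)⟩

section DampedOscillator

variable {u u' u'' p : ℝ → ℝ} {a : ℝ}

lemma dampedEnergy_antitoneOn (ha : 0 < a)
    (hu : ∀ t, HasDerivAt u (u' t) t) (hu' : ∀ t, HasDerivAt u' (u'' t) t)
    (hode : ∀ t ≥ 0, u'' t + 2 * a * u' t + p t * u t = 0)
    (hp : ∀ t ≥ 0, 0 ≤ p t ∧ p t ≤ 4 * a ^ 2) :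
    AntitoneOn (fun t => (u' t + a * u t) ^ 2 + a ^ 2 * u t ^ 2) (Ici 0) := by
  refine antitoneOn_Ici_of_hasDerivAt_nonpos
    (f' := fun t => 2 * (u' t + a * u t) * (u'' t + a * u' t) + a ^ 2 * (2 * u t * u' t))
    (fun t => ?_) fun t ht => ?_
  · refine ((((hu' t).fun_add ((hu t).const_mul a)).fun_pow 2).fun_add
      (((hu t).fun_pow 2).const_mul (a ^ 2))).congr_deriv ?_
    push_cast; ring
  · obtain ⟨hp0, hp4⟩ := hp t ht.le
    rw [show u'' t = -(2 * a * u' t) - p t * u t by linarith [hode t ht.le]]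
    -- the derivative is `-2 (a x² + p x y + a p y²)` with `x = u'`, `y = u`, and
    -- `4a (a x² + p x y + a p y²) = (2a x + p y)² + p (4a² - p) y²`
    nlinarith [sq_nonneg (2 * a * u' t + p t * u t),
      mul_nonneg (mul_nonneg hp0 (sub_nonneg.2 hp4)) (sq_nonneg (u t))]

lemma sq_le_of_damped (ha : 0 < a)
    (hu : ∀ t, HasDerivAt u (u' t) t) (hu' : ∀ t, HasDerivAt u' (u'' t) t)
    (hode : ∀ t ≥ 0, u'' t + 2 * a * u' t + p t * u t = 0)
    (hp : ∀ t ≥ 0, 0 ≤ p t ∧ p t ≤ 4 * a ^ 2) {t : ℝ} (ht : 0 ≤ t) :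
    u t ^ 2 ≤ 2 * u' 0 ^ 2 / a ^ 2 + 3 * u 0 ^ 2 := by
  have hE := dampedEnergy_antitoneOn ha hu hu' hode hp self_mem_Ici ht ht
  simp only at hE
  rw [div_add' _ _ _ (by positivity), le_div_iff₀ (by positivity)]
  nlinarith [sq_nonneg (u' t + a * u t), sq_nonneg (u' 0 - a * u 0)]

lemma deriv_sq_le_of_damped (ha : 0 < a)
    (hu : ∀ t, HasDerivAt u (u' t) t) (hu' : ∀ t, HasDerivAt u' (u'' t) t)
    (hode : ∀ t ≥ 0, u'' t + 2 * a * u' t + p t * u t = 0)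
    (hp : ∀ t ≥ 0, 0 ≤ p t ∧ p t ≤ 4 * a ^ 2) {P : ℝ} (hP : ∀ t ≥ 0, p t ≤ P)
    {t : ℝ} (ht : 0 ≤ t) :
    u' t ^ 2 ≤ u' 0 ^ 2 + P ^ 2 * (2 * u' 0 ^ 2 / a ^ 2 + 3 * u 0 ^ 2) / (4 * a ^ 2) := by
  set M := √(2 * u' 0 ^ 2 / a ^ 2 + 3 * u 0 ^ 2)
  have hP0 : 0 ≤ P := (hp 0 le_rfl).1.trans (hP 0 le_rfl)
  have hforce : ∀ s ≥ 0, |u'' s + 2 * a * u' s| ≤ 2 * a * (P * M / (2 * a)) := fun s hs => by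
    rw [mul_div_cancel₀ _ (by positivity), show u'' s + 2 * a * u' s = -(p s * u s) by
      linarith [hode s hs], abs_neg, abs_mul, abs_of_nonneg (hp s hs).1]
    exact mul_le_mul (hP s hs) (abs_le_sqrt (sq_le_of_damped ha hu hu' hode hp hs))
      (abs_nonneg _) hP0
  have hK : 0 ≤ P * M / (2 * a) := by positivity
  have hM : M ^ 2 = 2 * u' 0 ^ 2 / a ^ 2 + 3 * u 0 ^ 2 := sq_sqrt (by positivity)
  have hbound := abs_le_max_of_abs_deriv_add_mul_le (by positivity) hu' hforce ht
  have hsq : u' t ^ 2 ≤ u' 0 ^ 2 + (P * M / (2 * a)) ^ 2 := by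
    rcases le_max_iff.mp hbound with h | h <;>
      nlinarith [abs_nonneg (u' t), sq_abs (u' t), sq_abs (u' 0)]
  calc u' t ^ 2 ≤ u' 0 ^ 2 + (P * M / (2 * a)) ^ 2 := hsq
    _ = _ := by rw [div_pow, mul_pow, hM]; ring

end DampedOscillator

lemma weighted_sum_le {A B S L δ μ x y x₀ y₀ : ℝ} (hS : 0 < S) (hA : 0 ≤ A) (hB : 0 ≤ B)
    (hL : 0 ≤ L) (hLS : L ≤ S) (hBA : B * L ^ 2 ≤ A * S) (hAB : A ≤ B * S)
    (hx : x ^ 2 ≤ 2 * y₀ ^ 2 / (δ ^ 2 * S) + 3 * x₀ ^ 2)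
    (hy : y ^ 2 ≤
      y₀ ^ 2 + (L * μ) ^ 2 * (2 * y₀ ^ 2 / (δ ^ 2 * S) + 3 * x₀ ^ 2) / (4 * (δ ^ 2 * S))) :
    B * y ^ 2 + A * x ^ 2 ≤
      (2 + 2 / δ ^ 2 + μ ^ 2 / δ ^ 4) * B * y₀ ^ 2
        + 3 * (1 + μ ^ 2 / (2 * δ ^ 2)) * A * x₀ ^ 2 := by
  have hBL : B * L ^ 2 / S ^ 2 ≤ B := by
    rw [div_le_iff₀ (by positivity)]; gcongr
  have hBL' : B * L ^ 2 / S ≤ A := (div_le_iff₀ hS).2 hBA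
  have hAS : A / S ≤ B := (div_le_iff₀ hS).2 hAB
  calc B * y ^ 2 + A * x ^ 2
      ≤ B * (y₀ ^ 2 + (L * μ) ^ 2 * (2 * y₀ ^ 2 / (δ ^ 2 * S) + 3 * x₀ ^ 2) / (4 * (δ ^ 2 * S)))
        + A * (2 * y₀ ^ 2 / (δ ^ 2 * S) + 3 * x₀ ^ 2) := by gcongr
    _ = B * y₀ ^ 2 + μ ^ 2 / (2 * δ ^ 4) * (B * L ^ 2 / S ^ 2) * y₀ ^ 2
        + 3 * μ ^ 2 / (4 * δ ^ 2) * (B * L ^ 2 / S) * x₀ ^ 2 + 2 / δ ^ 2 * (A / S) * y₀ ^ 2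
        + 3 * A * x₀ ^ 2 := by field_simp; ring
    _ ≤ B * y₀ ^ 2 + μ ^ 2 / (2 * δ ^ 4) * B * y₀ ^ 2 + 3 * μ ^ 2 / (4 * δ ^ 2) * A * x₀ ^ 2
        + 2 / δ ^ 2 * B * y₀ ^ 2 + 3 * A * x₀ ^ 2 := by gcongr
    _ ≤ _ := by rw [← sub_nonneg]; ring_nf; positivity

theorem stmt4_general (δ l σ μ₂ α β : ℝ) (hδ : 0 < δ) (hl : 1 ≤ l) (hσ : 1/2 ≤ σ)
    (hαβ : 1 - σ ≤ α - β ∧ α - β ≤ σ)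
    (c : ℝ → ℝ)
    (hc : ∀ t ≥ (0:ℝ), 0 ≤ c t ∧ c t ≤ μ₂)
    (hmain : 4 * δ ^ 2 * l ^ (4*σ - 2) ≥ μ₂)
    (u u' u'' : ℝ → ℝ)
    (hu : ∀ t, HasDerivAt u (u' t) t) (hu' : ∀ t, HasDerivAt u' (u'' t) t)
    (hode : ∀ t ≥ (0:ℝ), u'' t + 2 * δ * l ^ (2*σ) * u' t + l ^ 2 * c t * u t = 0)
    (u₀ u₁ : ℝ) (h0 : u 0 = u₀) (h1 : u' 0 = u₁) :
    ∀ t ≥ (0:ℝ),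
      l ^ (4*β) * (u' t) ^ 2 + l ^ (4*α) * (u t) ^ 2 ≤
        (2 + 2 / δ ^ 2 + μ₂ ^ 2 / δ ^ 4) * l ^ (4*β) * u₁ ^ 2
        + 3 * (1 + μ₂ ^ 2 / (2 * δ ^ 2)) * l ^ (4*α) * u₀ ^ 2 := by
  intro t ht
  subst h0 h1
  have hl0 : 0 < l := by linarith
  have ha : 0 < δ * l ^ (2 * σ) := by positivity
  have ha2 : (δ * l ^ (2 * σ)) ^ 2 = δ ^ 2 * l ^ (4 * σ) := by
    rw [mul_pow, ← rpow_mul_natCast hl0.le]; ring_nf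
  have hl2 : l ^ 2 * l ^ (4 * σ - 2) = l ^ (4 * σ) := by
    rw [← rpow_natCast, ← rpow_add hl0]; norm_num
  have hp : ∀ s ≥ 0, 0 ≤ l ^ 2 * c s ∧ l ^ 2 * c s ≤ 4 * (δ * l ^ (2 * σ)) ^ 2 := fun s hs =>
    ⟨mul_nonneg (sq_nonneg l) (hc s hs).1, by rw [ha2, ← hl2]; nlinarith [hc s hs, sq_nonneg l]⟩
  have hode' : ∀ s ≥ 0, u'' s + 2 * (δ * l ^ (2 * σ)) * u' s + l ^ 2 * c s * u s = 0 :=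
    fun s hs => by linear_combination hode s hs
  have hu_sq := sq_le_of_damped ha hu hu' hode' hp ht
  have hu'_sq := deriv_sq_le_of_damped ha hu hu' hode' hp
    (fun s hs => mul_le_mul_of_nonneg_left (hc s hs).2 (sq_nonneg l)) ht
  rw [ha2] at hu_sq hu'_sq
  refine weighted_sum_le (by positivity) (by positivity) (by positivity) (sq_nonneg l) ?_ ?_ ?_
    hu_sq hu'_sq
  · rw [← rpow_natCast]
    exact rpow_le_rpow_of_exponent_le hl (by push_cast; linarith)
  · rw [← pow_mul, ← rpow_natCast, ← rpow_add hl0, ← rpow_add hl0]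
    exact rpow_le_rpow_of_exponent_le hl (by push_cast; linarith)
  · rw [← rpow_add hl0]
    exact rpow_le_rpow_of_exponent_le hl (by linarith)

theorem stmt4 (δ l σ μ₂ α β : ℝ) (hδ : 0 < δ) (hl : 1 ≤ l) (hσ : 1/2 ≤ σ)
    (hαβ : 1 - σ ≤ α - β ∧ α - β ≤ σ)
    (c : ℝ → ℝ) (hc_meas : Measurable c)
    (hc : ∀ t ≥ (0:ℝ), 0 ≤ c t ∧ c t ≤ μ₂)
    (hmain : 4 * δ ^ 2 * l ^ (4*σ - 2) ≥ μ₂)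
    (u u' u'' : ℝ → ℝ)
    (hu : ∀ t, HasDerivAt u (u' t) t) (hu' : ∀ t, HasDerivAt u' (u'' t) t)
    (hode : ∀ t ≥ (0:ℝ), u'' t + 2 * δ * l ^ (2*σ) * u' t + l ^ 2 * c t * u t = 0)
    (u₀ u₁ : ℝ) (h0 : u 0 = u₀) (h1 : u' 0 = u₁) :
    ∀ t ≥ (0:ℝ),
      l ^ (4*β) * (u' t) ^ 2 + l ^ (4*α) * (u t) ^ 2 ≤
        (2 + 2 / δ ^ 2 + μ₂ ^ 2 / δ ^ 4) * l ^ (4*β) * u₁ ^ 2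
        + 3 * (1 + μ₂ ^ 2 / (2 * δ ^ 2)) * l ^ (4*α) * u₀ ^ 2 :=
  stmt4_general δ l σ μ₂ α β hδ hl hσ hαβ c hc hmain u u' u'' hu hu' hode u₀ u₁ h0 h1
end

section
/- Let δ > 0, λ > 0, σ > 0, r > 0 satisfy δλ^{4σ-2} > rμ₂, 2δr ≤ 1, and 4δ²λ^{4σ-2} ≥ (1+2rδ)μ₂. Let c be measurable with 0 ≤ c(t) ≤ μ₂, and let u solve u'' + 2δλ^{2σ}u' + λ²c(t)u = 0. Then E(t) := (u'(t)+δλ^{2σ}u(t))² + δ²λ^{4σ}u(t)² satisfies E'(t) ≤ −2rλ^{2(1−σ)} c(t) E(t) for a.e. t ≥ 0, hence E(t) ≤ E(0) exp(−2rλ^{2(1−σ)} ∫₀ᵗ c(s) ds). -/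
/-!
By the equation, `E' + 2rλ^{2(1-σ)} c E = -2Q(u', u)` where `Q` is the quadratic form
`λ^{2σ}(δ - rλ^{2-4σ}c) v² + λ²(1-2rδ)c v x + δλ^{2σ+2}(1-2rδ)c x²`. Its outer coefficients are
nonnegative and its discriminant is `-λ⁴(1-2rδ)c(4δ²λ^{4σ-2} - (1+2rδ)c) ≤ 0`, so `Q ≥ 0`.

The integrated bound is Grönwall's inequality. As `c` is only measurable, `G(t) = ∫₀ᵗ g` with
`g = 2rλ^{2(1-σ)}c` is merely absolutely continuous; so is `E · exp G` (`E` is differentiable and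
nonincreasing), and its derivative `(E' + gE) exp G ≤ 0` exists almost everywhere.
-/

open Real MeasureTheory intervalIntegral Set

namespace AbsolutelyContinuousOnInterval

variable {f g : ℝ → ℝ} {a b : ℝ}

theorem of_dist_le_mul {K : ℝ} (hf : AbsolutelyContinuousOnInterval f a b)
    (hgf : ∀ x ∈ uIcc a b, ∀ y ∈ uIcc a b, dist (g x) (g y) ≤ K * dist (f x) (f y)) :
    AbsolutelyContinuousOnInterval g a b := by
  refine squeeze_zero' (Filter.Eventually.of_forall fun _ ↦ by positivity) ?_
    (by simpa using (show Filter.Tendsto _ _ _ from hf).const_mul K)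
  filter_upwards [Filter.mem_inf_of_right (Filter.mem_principal_self _)] with I hI
  rw [Finset.mul_sum]
  exact Finset.sum_le_sum fun i hi ↦ hgf _ (hI.1 i hi).1 _ (hI.1 i hi).2

theorem comp_contDiff {φ : ℝ → ℝ} (hf : AbsolutelyContinuousOnInterval f a b)
    (hφ : ContDiff ℝ 1 φ) : AbsolutelyContinuousOnInterval (fun x ↦ φ (f x)) a b := by
  obtain ⟨C, hC⟩ := hf.exists_bound
  obtain ⟨K, hK⟩ := hφ.contDiffOn.exists_lipschitzOnWith one_ne_zero
    (convex_closedBall (0 : ℝ) C) (isCompact_closedBall 0 C)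
  refine hf.of_dist_le_mul fun x hx y hy ↦ hK.dist_le_mul _ ?_ _ ?_
  · simpa using hC x hx
  · simpa using hC y hy

theorem le_mul_exp_neg_integral_of_deriv_le (hab : a ≤ b)
    (hf : AbsolutelyContinuousOnInterval f a b) (hg : IntervalIntegrable g volume a b)
    (hf' : ∀ᵐ x, x ∈ Icc a b → deriv f x ≤ -g x * f x) :
    f b ≤ f a * exp (-∫ x in a..b, g x) := by
  set G := fun x ↦ ∫ t in a..x, g t
  have hψ : AbsolutelyContinuousOnInterval (fun x ↦ f x * exp (G x)) a b :=
    hf.fun_mul ((hg.absolutelyContinuousOnInterval_intervalIntegral left_mem_uIcc).comp_contDiff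
      contDiff_exp)
  have hψ' : ∀ᵐ x, x ∈ Icc a b → deriv (fun x ↦ f x * exp (G x)) x ≤ 0 := by
    filter_upwards [hf.ae_differentiableAt, hg.ae_hasDerivAt_integral, hf'] with x hfx hGx hfx' hx
    rw [uIcc_of_le hab] at hfx hGx
    rw [(hfx hx).hasDerivAt.fun_mul ((hGx hx a (left_mem_Icc.2 hab)).exp) |>.deriv]
    nlinarith [exp_pos (G x), hfx' hx]
  have hmono : f b * exp (G b) ≤ f a * exp (G a) := by
    have := integral_nonneg_of_ae_restrict hab
      ((ae_restrict_iff' measurableSet_Icc).2 (hψ'.mono fun x hx hx' ↦ neg_nonneg.2 (hx hx')))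
    rw [intervalIntegral.integral_neg, hψ.integral_deriv_eq_sub] at this
    simpa using this
  simp only [G, integral_same, exp_zero, mul_one] at hmono
  rw [exp_neg, ← div_eq_mul_inv, le_div_iff₀ (exp_pos _)]
  exact hmono

end AbsolutelyContinuousOnInterval

theorem absolutelyContinuousOnInterval_of_hasDerivAt_of_nonpos {f f' : ℝ → ℝ} {a b : ℝ}
    (hf : ∀ x ∈ uIcc a b, HasDerivAt f (f' x) x) (hf' : ∀ x ∈ Ioo (min a b) (max a b), f' x ≤ 0) :
    AbsolutelyContinuousOnInterval f a b := by
  have hint : IntervalIntegrable f' volume a b := by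
    have := intervalIntegrable_deriv_of_nonneg (a := a) (b := b) (g := fun x ↦ -f x)
      (fun x hx ↦ (hf x hx).continuousAt.neg.continuousWithinAt)
      (fun x hx ↦ (hf x (Ioo_subset_Icc_self hx)).neg) fun x hx ↦ neg_nonneg.2 (hf' x hx)
    simpa [Pi.neg_def] using this.neg
  refine (hint.absolutelyContinuousOnInterval_intervalIntegral left_mem_uIcc).of_dist_le_mul
    (K := 1) fun x hx y hy ↦ ?_
  rw [integral_eq_sub_of_hasDerivAt (fun z hz ↦ hf z (uIcc_subset_uIcc_left hx hz))
      (hint.mono_set (uIcc_subset_uIcc_left hx)),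
    integral_eq_sub_of_hasDerivAt (fun z hz ↦ hf z (uIcc_subset_uIcc_left hy hz))
      (hint.mono_set (uIcc_subset_uIcc_left hy))]
  simp [dist_eq_norm]

theorem Measurable.intervalIntegrable_of_abs_le {f : ℝ → ℝ} {a b C : ℝ} (hf : Measurable f)
    (hab : a ≤ b) (h : ∀ x ∈ Ioc a b, |f x| ≤ C) : IntervalIntegrable f volume a b :=
  (intervalIntegrable_const (c := C)).mono_fun hf.aestronglyMeasurable
    ((ae_restrict_iff' measurableSet_uIoc).2 (ae_of_all _ fun x hx ↦
      (h x (uIoc_of_le hab ▸ hx)).trans (le_abs_self C)))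

theorem quadratic_form_nonneg_of_discrim_nonpos {a b c : ℝ} (ha : 0 ≤ a) (hc : 0 ≤ c)
    (h : discrim a b c ≤ 0) (x y : ℝ) : 0 ≤ a * x ^ 2 + b * x * y + c * y ^ 2 := by
  rw [discrim] at h
  rcases ha.eq_or_lt with rfl | ha
  · obtain rfl : b = 0 := by nlinarith
    simp only [zero_mul, zero_add]
    positivity
  · nlinarith [sq_nonneg (2 * a * x + b * y), mul_nonneg (neg_nonneg.2 h) (sq_nonneg y)]

theorem hasDerivAt_damped_energy {u u' u'' : ℝ → ℝ} {t : ℝ} (hu : HasDerivAt u (u' t) t)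
    (hu' : HasDerivAt u' (u'' t) t) (a b : ℝ) :
    HasDerivAt (fun t ↦ (u' t + a * u t) ^ 2 + b * u t ^ 2)
      (2 * (u' t + a * u t) * (u'' t + a * u' t) + b * (2 * u t * u' t)) t := by
  refine (((hu'.fun_add (hu.const_mul a)).pow 2).fun_add ((hu.pow 2).const_mul b)).congr_deriv ?_
  push_cast
  ring

/- With `K = λ^{2(1-σ)}` and `M = λ^{4σ-2}` one has `λ^{2σ} = KM` and `λ² = K²M`, so the
inequality is polynomial in `K` and `M`. -/
theorem damped_energy_deriv_le {δ r K M c x v w : ℝ} (hδ : 0 < δ) (hK : 0 ≤ K) (hc : 0 ≤ c)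
    (hrδ : 2 * δ * r ≤ 1) (hcM : (1 + 2 * r * δ) * c ≤ 4 * δ ^ 2 * M)
    (hode : w + 2 * δ * (K * M) * v + K ^ 2 * M * c * x = 0) :
    2 * (v + δ * (K * M) * x) * (w + δ * (K * M) * v) + δ ^ 2 * (K * M) ^ 2 * (2 * x * v)
      ≤ -(2 * r * K * c) * ((v + δ * (K * M) * x) ^ 2 + δ ^ 2 * (K * M) ^ 2 * x ^ 2) := by
  have hrδ' : 0 ≤ 1 - 2 * r * δ := by linarith
  -- `4δ(δM - rc) ≥ (1 - 2rδ)c`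
  have hA : 0 ≤ δ * M - r * c := by nlinarith
  have hdiscrim : discrim (δ * M - r * c) (K * M * c * (1 - 2 * r * δ))
      (δ * K ^ 2 * M ^ 2 * c * (1 - 2 * r * δ))
      = -(K ^ 2 * M ^ 2 * c * (1 - 2 * r * δ) * (4 * δ ^ 2 * M - (1 + 2 * r * δ) * c)) := by
    rw [discrim]; ring
  have hQ := quadratic_form_nonneg_of_discrim_nonpos hA (by positivity)
    (hdiscrim ▸ neg_nonpos.2 (mul_nonneg (by positivity) (by linarith))) v x
  linear_combination (2 * (v + δ * (K * M) * x)) * hode + (2 * K) * hQ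

theorem rpow_two_mul_eq_mul {l σ : ℝ} (hl : 0 < l) :
    l ^ (2 * σ) = l ^ (2 * (1 - σ)) * l ^ (4 * σ - 2) := by
  rw [← rpow_add hl]; congr 1; ring

theorem stmt5_general (δ l σ r μ₂ : ℝ) (hδ : 0 < δ) (hl : 0 < l) (hr : 0 < r)
    (h2 : 2 * δ * r ≤ 1)
    (h3 : 4 * δ ^ 2 * l ^ (4*σ - 2) ≥ (1 + 2 * r * δ) * μ₂)
    (c : ℝ → ℝ) (hc_meas : Measurable c)
    (hc : ∀ t ≥ (0:ℝ), 0 ≤ c t ∧ c t ≤ μ₂)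
    (u u' u'' : ℝ → ℝ)
    (hu : ∀ t, HasDerivAt u (u' t) t) (hu' : ∀ t, HasDerivAt u' (u'' t) t)
    (hode : ∀ t ≥ (0:ℝ), u'' t + 2 * δ * l ^ (2*σ) * u' t + l ^ 2 * c t * u t = 0)
    (E : ℝ → ℝ)
    (hE : ∀ t, E t = (u' t + δ * l ^ (2*σ) * u t) ^ 2 + δ ^ 2 * l ^ (4*σ) * (u t) ^ 2) :
    (∀ᵐ t ∂volume, 0 ≤ t → deriv E t ≤ -(2 * r * l ^ (2*(1-σ)) * c t) * E t) ∧
    ∀ t ≥ (0:ℝ),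
      E t ≤ E 0 * Real.exp (-(2 * r * l ^ (2*(1-σ))) * ∫ s in (0:ℝ)..t, c s) := by
  set K := l ^ (2 * (1 - σ))
  set M := l ^ (4 * σ - 2)
  have hΛ : l ^ (2 * σ) = K * M := rpow_two_mul_eq_mul hl
  have hΛsq : l ^ (4 * σ) = (K * M) ^ 2 := by rw [← hΛ, sq, ← rpow_add hl]; congr 1; ring
  have hl2 : l ^ 2 = K ^ 2 * M := by
    rw [sq K, ← rpow_add hl, ← rpow_add hl, ← rpow_natCast]; congr 1; push_cast; ring
  have hE' : ∀ t, HasDerivAt E (2 * (u' t + δ * (K * M) * u t) * (u'' t + δ * (K * M) * u' t)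
      + δ ^ 2 * (K * M) ^ 2 * (2 * u t * u' t)) t := fun t ↦ by
    convert hasDerivAt_damped_energy (hu t) (hu' t) _ _ using 1
    exact funext fun t ↦ by rw [hE, hΛ, hΛsq]
  have hdiss : ∀ t ≥ 0, deriv E t ≤ -(2 * r * K * c t) * E t := fun t ht ↦ by
    rw [(hE' t).deriv, hE, hΛ, hΛsq]
    refine damped_energy_deriv_le hδ (rpow_nonneg hl.le _) (hc t ht).1 h2 ?_ (hl2 ▸ hΛ ▸ hode t ht)
    exact (mul_le_mul_of_nonneg_left (hc t ht).2 (by positivity)).trans h3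
  refine ⟨ae_of_all _ hdiss, fun t ht ↦ ?_⟩
  have hg : IntervalIntegrable (fun s ↦ 2 * r * K * c s) volume 0 t :=
    (hc_meas.intervalIntegrable_of_abs_le ht fun s hs ↦
      abs_of_nonneg (hc s hs.1.le).1 ▸ (hc s hs.1.le).2).const_mul _
  have hEac : AbsolutelyContinuousOnInterval E 0 t := by
    refine absolutelyContinuousOnInterval_of_hasDerivAt_of_nonpos (fun s _ ↦ hE' s) fun s hs ↦ ?_
    rw [min_eq_left ht, max_eq_right ht] at hs
    have hEs : 0 ≤ E s := by rw [hE]; positivity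
    rw [← (hE' s).deriv]
    refine (hdiss s hs.1.le).trans ?_
    rw [neg_mul, neg_nonpos]
    exact mul_nonneg (mul_nonneg (by positivity) (hc s hs.1.le).1) hEs
  have := hEac.le_mul_exp_neg_integral_of_deriv_le ht hg (ae_of_all _ fun s hs ↦ hdiss s hs.1)
  rwa [intervalIntegral.integral_const_mul, ← neg_mul] at this

theorem stmt5 (δ l σ r μ₂ : ℝ) (hδ : 0 < δ) (hl : 0 < l) (hσ : 0 < σ) (hr : 0 < r)
    (h1 : δ * l ^ (4*σ - 2) > r * μ₂)
    (h2 : 2 * δ * r ≤ 1)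
    (h3 : 4 * δ ^ 2 * l ^ (4*σ - 2) ≥ (1 + 2 * r * δ) * μ₂)
    (c : ℝ → ℝ) (hc_meas : Measurable c)
    (hc : ∀ t ≥ (0:ℝ), 0 ≤ c t ∧ c t ≤ μ₂)
    (u u' u'' : ℝ → ℝ)
    (hu : ∀ t, HasDerivAt u (u' t) t) (hu' : ∀ t, HasDerivAt u' (u'' t) t)
    (hode : ∀ t ≥ (0:ℝ), u'' t + 2 * δ * l ^ (2*σ) * u' t + l ^ 2 * c t * u t = 0)
    (E : ℝ → ℝ)
    (hE : ∀ t, E t = (u' t + δ * l ^ (2*σ) * u t) ^ 2 + δ ^ 2 * l ^ (4*σ) * (u t) ^ 2) :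
    (∀ᵐ t ∂volume, 0 ≤ t → deriv E t ≤ -(2 * r * l ^ (2*(1-σ)) * c t) * E t) ∧
    ∀ t ≥ (0:ℝ),
      E t ≤ E 0 * Real.exp (-(2 * r * l ^ (2*(1-σ))) * ∫ s in (0:ℝ)..t, c s) :=
  stmt5_general δ l σ r μ₂ hδ hl hr h2 h3 c hc_meas hc u u' u'' hu hu' hode E hE
end

section
/- Fix δ > 0, σ ≥ 0, ε > 0, λ > 0. Define b(t) := (2ελ − δλ^{2σ})t − ε sin(2λt), w(t) := sin(λt) e^{b(t)}, and γ(t) := 1 + δ²/λ^{2−4σ} − 16ε² sin⁴(λt) − 8ε sin(2λt). Then w''(t) + 2δλ^{2σ} w'(t) + λ² γ(t) w(t) = 0 for all t ∈ ℝ. -/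
open Real

/-
The ansatz is w = u·e^b with u(t) = sin(λt). Each differentiation of u·e^b produces
(u' + b'u)·e^b, so after dividing by e^b the equation becomes an identity between
trigonometric polynomials in sin(λt) and cos(λt), which closes once sin(2λt), cos(2λt) are
expanded and λ²·δ²/λ^{2-4σ} is recognised as the square of the damping rate δλ^{2σ}.
-/

theorem HasDerivAt.mul_exp {u b : ℝ → ℝ} {u' b' t : ℝ} (hu : HasDerivAt u u' t)
    (hb : HasDerivAt b b' t) :
    HasDerivAt (fun t => u t * Real.exp (b t)) ((u' + b' * u t) * Real.exp (b t)) t :=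
  (hu.mul hb.exp).congr_deriv (by ring)

theorem hasDerivAt_sin_const_mul (a t : ℝ) :
    HasDerivAt (fun t => sin (a * t)) (a * cos (a * t)) t :=
  (((hasDerivAt_id t).const_mul a).sin).congr_deriv (by simp [mul_comm])

theorem hasDerivAt_cos_const_mul (a t : ℝ) :
    HasDerivAt (fun t => cos (a * t)) (-(a * sin (a * t))) t :=
  (((hasDerivAt_id t).const_mul a).cos).congr_deriv (by simp [mul_comm])

theorem sq_mul_div_rpow_two_sub_four_mul {l : ℝ} (hl : 0 < l) (δ σ : ℝ) :
    l ^ 2 * (δ ^ 2 / l ^ (2 - 4 * σ)) = (δ * l ^ (2 * σ)) ^ 2 := by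
  have hsplit : l ^ (2 - 4 * σ) * (l ^ (2 * σ)) ^ 2 = l ^ 2 := by
    rw [← rpow_mul_natCast hl.le, ← rpow_add hl, Nat.cast_ofNat,
      show 2 - 4 * σ + 2 * σ * 2 = (2 : ℝ) by ring, rpow_two]
  have hne : l ^ (2 - 4 * σ) ≠ 0 := (rpow_pos_of_pos hl _).ne'
  field_simp
  rw [← hsplit]
  ring

theorem stmt12_general (δ σ ε l : ℝ) (hl : 0 < l)
    (b w γ : ℝ → ℝ)
    (hb : ∀ t, b t = (2 * ε * l - δ * l ^ (2*σ)) * t - ε * Real.sin (2 * l * t))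
    (hw : ∀ t, w t = Real.sin (l * t) * Real.exp (b t))
    (hγ : ∀ t, γ t = 1 + δ ^ 2 / l ^ (2 - 4*σ)
      - 16 * ε ^ 2 * (Real.sin (l * t)) ^ 4 - 8 * ε * Real.sin (2 * l * t)) :
    ∀ t : ℝ,
      deriv (deriv w) t + 2 * δ * l ^ (2*σ) * deriv w t + l ^ 2 * γ t * w t = 0 := by
  set A := 2 * ε * l - δ * l ^ (2 * σ)
  have hb' (t : ℝ) : HasDerivAt b (A - 2 * ε * l * cos (2 * l * t)) t := by
    rw [funext hb]
    exact (((hasDerivAt_id t).const_mul A).sub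
      ((hasDerivAt_sin_const_mul (2 * l) t).const_mul ε)).congr_deriv
        (by simp only [mul_one]; ring)
  set v := fun t => l * cos (l * t) + (A - 2 * ε * l * cos (2 * l * t)) * sin (l * t)
  have hw' : deriv w = fun t => v t * exp (b t) := by
    rw [funext hw]
    exact funext fun t => (HasDerivAt.mul_exp (hasDerivAt_sin_const_mul l t) (hb' t)).deriv
  have hv (t : ℝ) : HasDerivAt v (-(l ^ 2 * sin (l * t))
      + 4 * ε * l ^ 2 * sin (2 * l * t) * sin (l * t)
      + (A - 2 * ε * l * cos (2 * l * t)) * (l * cos (l * t))) t :=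
    ((hasDerivAt_cos_const_mul l t).const_mul l |>.add
      ((((hasDerivAt_cos_const_mul (2 * l) t).const_mul (2 * ε * l)).const_sub A).mul
        (hasDerivAt_sin_const_mul l t))).congr_deriv (by ring)
  intro t
  rw [hw', ((hv t).mul_exp (hb' t)).deriv, hγ, hw]
  have hsin2 : sin (2 * l * t) = 2 * sin (l * t) * cos (l * t) := by
    rw [mul_assoc, sin_two_mul]
  have hcos2 : cos (2 * l * t) = 1 - 2 * sin (l * t) ^ 2 := by
    rw [mul_assoc, cos_two_mul, cos_sq']
    ring
  simp only [v]
  rw [hsin2, hcos2]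
  linear_combination sin (l * t) * exp (b t) * sq_mul_div_rpow_two_sub_four_mul hl δ σ

theorem stmt12 (δ σ ε l : ℝ) (hδ : 0 < δ) (hσ : 0 ≤ σ) (hε : 0 < ε) (hl : 0 < l)
    (b w γ : ℝ → ℝ)
    (hb : ∀ t, b t = (2 * ε * l - δ * l ^ (2*σ)) * t - ε * Real.sin (2 * l * t))
    (hw : ∀ t, w t = Real.sin (l * t) * Real.exp (b t))
    (hγ : ∀ t, γ t = 1 + δ ^ 2 / l ^ (2 - 4*σ)
      - 16 * ε ^ 2 * (Real.sin (l * t)) ^ 4 - 8 * ε * Real.sin (2 * l * t)) :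
    ∀ t : ℝ,
      deriv (deriv w) t + 2 * δ * l ^ (2*σ) * deriv w t + l ^ 2 * γ t * w t = 0 :=
  stmt12_general δ σ ε l hl b w γ hb hw hγ
end
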